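/- arXiv:math/0411575 — 7 statements merged into one kernel-verified Lean document; each statement's English description precedes it below -/
import Mathlib

section
/- Every cell is a commutative subset: for each x ∈ E, the set C²({x}) is commutative, i.e., any two elements of C²({x}) are related by R. -/
/-- The commutant of a subset `X` with respect to a binary relation `R`. -/
def Cop {E : Type*} (R : E → E → Prop) (X : Set E) : Set E := {y | ∀ x ∈ X, R y x}

theorem stmt_4 {E : Type*} (R : E → E → Prop) (hsymm : Symmetric R) (hrefl : Reflexive R)
    (x : E) :
    ∀ y ∈ Cop R (Cop R {x}), ∀ z ∈ Cop R (Cop R {x}), R y z := by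
  intro y hy z hz
  have hzx : z ∈ Cop R {x} := by
    intro w hw
    rw [Set.mem_singleton_iff] at hw
    rw [hw]
    exact hz x (fun u hu => by rw [Set.mem_singleton_iff] at hu; rw [hu]; exact hrefl x)
  exact hy z hzx
end

section
/- If two kernels contain a pair of related elements then they are pairwise fully related: for kernels N, P, if there exist x ∈ N and y ∈ P with x R y, then x' R y' for all x' ∈ N and y' ∈ P. -/
/-- The kernel (noyau) of an element: its equivalence class for `C({x}) = C({y})`. -/
def ker {E : Type*} (R : E → E → Prop) (a : E) : Set E := {y | Cop R {y} = Cop R {a}}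

theorem stmt_8 {E : Type*} (R : E → E → Prop) (hsymm : Symmetric R) (hrefl : Reflexive R)
    (a b : E) (x y : E) (hx : x ∈ ker R a) (hy : y ∈ ker R b) (hxy : R x y) :
    ∀ x' ∈ ker R a, ∀ y' ∈ ker R b, R x' y' := by
  intro x' hx' y' hy'
  have hmem : ∀ (u v : E), v ∈ Cop R {u} ↔ R v u := by
    intro u v
    constructor
    · intro h; exact h u rfl
    · intro h w hw; cases hw; exact h
  -- y ∈ Cop R {x} since R y x
  have h1 : y ∈ Cop R {x} := (hmem x y).2 (hsymm hxy)
  have hxx' : Cop R {x} = Cop R {x'} := hx.trans hx'.symm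
  have h2 : R y x' := (hmem x' y).1 (hxx' ▸ h1)
  have h3 : x' ∈ Cop R {y} := (hmem y x').2 (hsymm h2)
  have hyy' : Cop R {y} = Cop R {y'} := hy.trans hy'.symm
  exact (hmem y' x').1 (hyy' ▸ h3)
end

section
/- Suppose (E,R) and (E',R') are sets with symmetric reflexive relations and ψ is a cardinality-preserving bijection between their sets of kernels such that N R_𝒫 P iff ψ(N) R'_𝒫 ψ(P). Then any bijection f : E → E' that maps each kernel N bijectively onto ψ(N) satisfies: x R y iff f(x) R' f(y). In particular, (E,R) and (E',R') are isomorphic as sets with relations. -/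
/-- The set of kernels (noyaux) of `(E, R)`: equivalence classes of `C({x}) = C({y})`. -/
def kernels {E : Type*} (R : E → E → Prop) : Set (Set E) :=
  {N | ∃ a : E, N = {y | Cop R {y} = Cop R {a}}}

lemma mem_cop_single {E : Type*} (R : E → E → Prop) (a y : E) :
    y ∈ Cop R {a} ↔ R y a := by
  simp [Cop]

lemma kernel_spread {E : Type*} {R : E → E → Prop} (hsymm : Symmetric R)
    {N P : Set E} (hN : N ∈ kernels R) (hP : P ∈ kernels R)
    {u v : E} (hu : u ∈ N) (hv : v ∈ P) (huv : R u v) :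
    ∀ u' ∈ N, ∀ v' ∈ P, R u' v' := by
  obtain ⟨a, rfl⟩ := hN
  obtain ⟨b, rfl⟩ := hP
  intro u' hu' v' hv'
  simp only [Set.mem_setOf_eq] at hu hv hu' hv'
  have h1 : v ∈ Cop R {u'} := by
    rw [hu', ← hu]
    exact (mem_cop_single R u v).2 (hsymm huv)
  have h2 : u' ∈ Cop R {v'} := by
    rw [hv', ← hv]
    exact (mem_cop_single R v u').2 (hsymm ((mem_cop_single R u' v).1 h1))
  exact (mem_cop_single R v' u').1 h2

theorem stmt_10 {E E' : Type*} (R : E → E → Prop) (R' : E' → E' → Prop)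
    (hsymm : Symmetric R) (hrefl : Reflexive R)
    (hsymm' : Symmetric R') (hrefl' : Reflexive R')
    (ψ : Set E → Set E')
    (hbij : Set.BijOn ψ (kernels R) (kernels R'))
    (hcard : ∀ N ∈ kernels R, Nonempty (N ≃ ψ N))
    (hrel : ∀ N ∈ kernels R, ∀ P ∈ kernels R,
      ((∀ x ∈ N, ∀ y ∈ P, R x y) ↔ (∀ x' ∈ ψ N, ∀ y' ∈ ψ P, R' x' y')))
    (f : E ≃ E') (hf : ∀ N ∈ kernels R, f '' N = ψ N) :
    ∀ x y : E, R x y ↔ R' (f x) (f y) := by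
  intro x y
  set N : Set E := {z | Cop R {z} = Cop R {x}} with hNdef
  set P : Set E := {z | Cop R {z} = Cop R {y}} with hPdef
  have hN : N ∈ kernels R := ⟨x, rfl⟩
  have hP : P ∈ kernels R := ⟨y, rfl⟩
  have hxN : x ∈ N := rfl
  have hyP : y ∈ P := rfl
  have hfxN : f x ∈ ψ N := by rw [← hf N hN]; exact ⟨x, hxN, rfl⟩
  have hfyP : f y ∈ ψ P := by rw [← hf P hP]; exact ⟨y, hyP, rfl⟩
  constructor
  · intro hxy
    exact (hrel N hN P hP).1 (kernel_spread hsymm hN hP hxN hyP hxy) _ hfxN _ hfyP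
  · intro h'
    exact (hrel N hN P hP).2
      (kernel_spread hsymm' (hbij.mapsTo hN) (hbij.mapsTo hP) hfxN hfyP h') x hxN y hyP
end

section
/- Let φ : [E] → [E'] be an 𝔽₂-linear isomorphism between the spaces of finite subsets (under symmetric difference) of two sets with symmetric reflexive relations (E,R), (E',R'), mapping the set [E]_c of finite commutative subsets onto [E']_c. Then for finite commutative X, Y ⊆ E, the union X ∪ Y is commutative if and only if φ(X) ∪ φ(Y) is commutative. -/
/-- A subset is commutative if any two of its elements are related by `R`. -/
def CommSet {E : Type*} (R : E → E → Prop) (A : Set E) : Prop := ∀ x ∈ A, ∀ y ∈ A, R x y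

/-- The element of `[E] = E →₀ ZMod 2` corresponding to a finite subset of `E`. -/
noncomputable def ind {E : Type*} (X : Finset E) : E →₀ ZMod 2 :=
  Finsupp.indicator X fun _ _ => 1

/-- `[E]_c` : the set of elements of `[E]` whose support is commutative. -/
def commc {E : Type*} (R : E → E → Prop) : Set (E →₀ ZMod 2) :=
  {v | CommSet R ↑v.support}

lemma ind_support {E : Type*} (X : Finset E) : (ind X).support = X := by
  ext x
  classical
  simp [ind, Finsupp.mem_support_iff, Finsupp.indicator_apply]

lemma key {E : Type*} (R : E → E → Prop) (hsymm : Symmetric R)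
    (u v : E →₀ ZMod 2) (hu : u ∈ commc R) (hv : v ∈ commc R) :
    CommSet R (↑u.support ∪ ↑v.support) ↔ (u + v) ∈ commc R := by
  classical
  constructor
  · intro h x hx y hy
    have hs : ((u + v).support : Set E) ⊆ ↑u.support ∪ ↑v.support := by
      intro z hz
      have := Finsupp.support_add (g₁ := u) (g₂ := v) hz
      simpa using this
    exact h x (hs hx) y (hs hy)
  · intro h
    have hmix : ∀ x y : E, x ∈ u.support → y ∈ v.support → R x y := by
      intro x y hx hy
      by_cases hyu : y ∈ u.support
      · exact hu x hx y hyu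
      · by_cases hxv : x ∈ v.support
        · exact hv x hxv y hy
        · have hx' : x ∈ (u + v).support := by
            rw [Finsupp.mem_support_iff] at *
            simp only [Finsupp.add_apply]
            simp only [not_not] at hxv
            simpa [hxv] using hx
          have hy' : y ∈ (u + v).support := by
            rw [Finsupp.mem_support_iff] at *
            simp only [Finsupp.add_apply]
            simp only [not_not] at hyu
            simpa [hyu] using hy
          exact h x hx' y hy'
    intro x hx y hy
    rcases hx with hx | hx <;> rcases hy with hy | hy
    · exact hu x hx y hy
    · exact hmix x y hx hy
    · exact hsymm (hmix y x hy hx)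
    · exact hv x hx y hy

theorem stmt_12 {E E' : Type*} (R : E → E → Prop) (R' : E' → E' → Prop)
    (hsymm : Symmetric R) (hrefl : Reflexive R)
    (hsymm' : Symmetric R') (hrefl' : Reflexive R')
    (φ : (E →₀ ZMod 2) ≃ₗ[ZMod 2] (E' →₀ ZMod 2))
    (hφ : ⇑φ '' commc R = commc R')
    (X Y : Finset E) (hX : CommSet R ↑X) (hY : CommSet R ↑Y) :
    CommSet R (↑X ∪ ↑Y : Set E) ↔
      CommSet R' ((↑(φ (ind X)).support ∪ ↑(φ (ind Y)).support : Set E')) := by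
  have hmem : ∀ u : E →₀ ZMod 2, u ∈ commc R ↔ φ u ∈ commc R' := by
    intro u
    constructor
    · intro h
      rw [← hφ]; exact ⟨u, h, rfl⟩
    · intro h
      rw [← hφ] at h
      obtain ⟨w, hw, hwu⟩ := h
      rwa [← φ.injective hwu]
  have hXc : ind X ∈ commc R := by simpa [commc, ind_support] using hX
  have hYc : ind Y ∈ commc R := by simpa [commc, ind_support] using hY
  have hXc' : φ (ind X) ∈ commc R' := (hmem _).1 hXc
  have hYc' : φ (ind Y) ∈ commc R' := (hmem _).1 hYc
  have e1 : CommSet R (↑X ∪ ↑Y : Set E) ↔ ind X + ind Y ∈ commc R := by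
    have := key R hsymm (ind X) (ind Y) hXc hYc
    rwa [ind_support, ind_support] at this
  rw [e1, hmem, map_add]
  exact (key R' hsymm' (φ (ind X)) (φ (ind Y)) hXc' hYc').symm
end

section
/- Let φ : [E] → [E'] be an 𝔽₂-linear isomorphism mapping [E]_c onto [E']_c. Then for every x ∈ E there exists x' ∈ φ({x}) with x ∈ φ⁻¹({x'}), and for any such x', φ maps the set of finite subsets of the cell C²({x}) onto the set of finite subsets of the cell C'²({x'}). -/
/-- `[T]` : the set of elements of `[E]` supported in `T`. -/
def subOf {E : Type*} (T : Set E) : Set (E →₀ ZMod 2) := {v | ↑v.support ⊆ T}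

section Aux

variable {E : Type*} {E' : Type*}

/-- The intrinsic (commc-definable) version of `subOf (Cop R (Cop R (supp u)))`. -/
def Dcell {E : Type*} (R : E → E → Prop) (u : E →₀ ZMod 2) : Set (E →₀ ZMod 2) :=
  {v | v ∈ commc R ∧ ∀ w ∈ commc R, w + u ∈ commc R → v + w ∈ commc R}

lemma ind_single (x : E) : ind {x} = Finsupp.single x 1 := by
  classical
  ext a
  rw [ind, Finsupp.indicator_apply, Finsupp.single_apply]
  by_cases h : a = x
  · subst h; simp
  · rw [dif_neg (by simpa using h), if_neg (fun h' => h h'.symm)]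

lemma supp_ind (x : E) : (((ind {x}).support : Finset E) : Set E) = {x} := by
  rw [ind_single, Finsupp.support_single_ne_zero x one_ne_zero]
  simp

lemma mem_commc_iff {R : E → E → Prop} {v : E →₀ ZMod 2} :
    v ∈ commc R ↔ ∀ a ∈ v.support, ∀ b ∈ v.support, R a b := Iff.rfl

lemma ind_mem_commc {R : E → E → Prop} (hrefl : Reflexive R) (x : E) :
    ind {x} ∈ commc R := by
  have h : CommSet R ({x} : Set E) := by
    intro a ha b hb
    rw [Set.mem_singleton_iff] at ha hb
    subst ha; subst hb; exact hrefl _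
  simpa only [commc, Set.mem_setOf_eq, supp_ind] using h

lemma subset_cop_of_commc {R : E → E → Prop} {u : E →₀ ZMod 2} (hu : u ∈ commc R) :
    (u.support : Set E) ⊆ Cop R ↑u.support := fun a ha b hb => hu a ha b hb

lemma cop_anti {R : E → E → Prop} {X Y : Set E} (h : X ⊆ Y) : Cop R Y ⊆ Cop R X :=
  fun z hz a ha => hz a (h ha)

lemma cop2_subset_cop {R : E → E → Prop} {A : Set E} (hA : CommSet R A) :
    Cop R (Cop R A) ⊆ Cop R A := by
  intro z hz a ha
  exact hz a (fun b hb => hA a ha b hb)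

lemma commSet_cop2 {R : E → E → Prop} {A : Set E} (hA : CommSet R A) :
    CommSet R (Cop R (Cop R A)) := by
  intro a ha b hb
  exact ha b (cop2_subset_cop hA hb)

/-- If `w` and `w + u` are commutative (and `u` is), then `supp w ⊆ Cop R (supp u)`. -/
lemma supp_subset_cop {R : E → E → Prop} {u w : E →₀ ZMod 2}
    (hu : u ∈ commc R) (hw : w ∈ commc R) (hwu : w + u ∈ commc R) :
    (w.support : Set E) ⊆ Cop R ↑u.support := by
  intro b hb a ha
  have hb' : b ∈ w.support := hb
  have ha' : a ∈ u.support := ha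
  by_cases hbu : b ∈ u.support
  · exact hu b hbu a ha'
  · by_cases haw : a ∈ w.support
    · exact hw b hb' a haw
    · have h1 : b ∈ (w + u).support := by
        rw [Finsupp.mem_support_iff, Finsupp.add_apply,
          Finsupp.notMem_support_iff.mp hbu, add_zero]
        exact Finsupp.mem_support_iff.mp hb'
      have h2 : a ∈ (w + u).support := by
        rw [Finsupp.mem_support_iff, Finsupp.add_apply,
          Finsupp.notMem_support_iff.mp haw, zero_add]
        exact Finsupp.mem_support_iff.mp ha'
      exact hwu b h1 a h2

/-- Key characterization: the intrinsic set `Dcell R u` equals `[Cop² (supp u)]`. -/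
lemma Dcell_eq {R : E → E → Prop} (hsymm : Symmetric R) (hrefl : Reflexive R)
    {u : E →₀ ZMod 2} (hu : u ∈ commc R) :
    Dcell R u = subOf (Cop R (Cop R ↑u.support)) := by
  classical
  ext v
  constructor
  · rintro ⟨hv, hD⟩
    intro z hz y hy
    -- goal : R z y  where z ∈ supp v, y ∈ Cop R (supp u)
    have hz' : z ∈ v.support := hz
    have hw : ind {y} ∈ commc R := ind_mem_commc hrefl y
    have hwu : ind {y} + u ∈ commc R := by
      intro a ha b hb
      have ha' : a ∈ (ind {y}).support ∪ u.support := Finsupp.support_add ha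
      have hb' : b ∈ (ind {y}).support ∪ u.support := Finsupp.support_add hb
      have hys : ((ind {y}).support : Set E) = {y} := supp_ind y
      rcases Finset.mem_union.mp ha' with ha2 | ha2 <;>
        rcases Finset.mem_union.mp hb' with hb2 | hb2
      · have : a = y := by
          have := Set.mem_of_mem_of_subset (show a ∈ ((ind {y}).support : Set E) from ha2)
            (by rw [hys])
          simpa using this
        have hb3 : b = y := by
          have := Set.mem_of_mem_of_subset (show b ∈ ((ind {y}).support : Set E) from hb2)
            (by rw [hys])
          simpa using this
        subst this; subst hb3; exact hrefl _
      · have : a = y := by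
          have := Set.mem_of_mem_of_subset (show a ∈ ((ind {y}).support : Set E) from ha2)
            (by rw [hys])
          simpa using this
        subst this
        exact hy b hb2
      · have hb3 : b = y := by
          have := Set.mem_of_mem_of_subset (show b ∈ ((ind {y}).support : Set E) from hb2)
            (by rw [hys])
          simpa using this
        subst hb3
        exact hsymm (hy a ha2)
      · exact hu a ha2 b hb2
    have hvw : v + ind {y} ∈ commc R := hD _ hw hwu
    by_cases hzy : z = y
    · subst hzy; exact hrefl z
    · by_cases hyv : y ∈ v.support
      · exact hv z hz' y hyv
      · have h1 : z ∈ (v + ind {y}).support := by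
          have hz0 : (Finsupp.single y (1 : ZMod 2)) z = 0 :=
            Finsupp.single_eq_of_ne' (fun h => hzy h.symm)
          rw [Finsupp.mem_support_iff, Finsupp.add_apply, ind_single, hz0, add_zero]
          exact Finsupp.mem_support_iff.mp hz'
        have h2 : y ∈ (v + ind {y}).support := by
          rw [Finsupp.mem_support_iff, Finsupp.add_apply,
            Finsupp.notMem_support_iff.mp hyv, ind_single, Finsupp.single_eq_same,
            zero_add]
          exact one_ne_zero
        exact hvw z h1 y h2
  · intro hsub
    have hA : CommSet R (u.support : Set E) := hu
    have hC2 := commSet_cop2 (R := R) hA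
    have hv : v ∈ commc R := fun a ha b hb => hC2 a (hsub ha) b (hsub hb)
    refine ⟨hv, ?_⟩
    intro w hw hwu
    have hwc := supp_subset_cop hu hw hwu
    intro a ha b hb
    have ha' : a ∈ v.support ∪ w.support := Finsupp.support_add ha
    have hb' : b ∈ v.support ∪ w.support := Finsupp.support_add hb
    rcases Finset.mem_union.mp ha' with ha2 | ha2 <;>
      rcases Finset.mem_union.mp hb' with hb2 | hb2
    · exact hv a ha2 b hb2
    · exact hsub ha2 b (hwc hb2)
    · exact hsymm (hsub hb2 a (hwc ha2))
    · exact hw a ha2 b hb2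

lemma mem_commc_image_iff {R : E → E → Prop} {R' : E' → E' → Prop}
    (φ : (E →₀ ZMod 2) ≃ₗ[ZMod 2] (E' →₀ ZMod 2))
    (hφ : ⇑φ '' commc R = commc R') (v : E →₀ ZMod 2) :
    φ v ∈ commc R' ↔ v ∈ commc R := by
  constructor
  · intro h
    rw [← hφ] at h
    obtain ⟨a, ha, hav⟩ := h
    rwa [← φ.injective hav]
  · intro h
    rw [← hφ]
    exact ⟨v, h, rfl⟩

lemma Dcell_image {R : E → E → Prop} {R' : E' → E' → Prop}
    (φ : (E →₀ ZMod 2) ≃ₗ[ZMod 2] (E' →₀ ZMod 2))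
    (hφ : ⇑φ '' commc R = commc R') (u : E →₀ ZMod 2) :
    ⇑φ '' Dcell R u = Dcell R' (φ u) := by
  have hmem := mem_commc_image_iff φ hφ
  ext v'
  constructor
  · rintro ⟨v, ⟨hv, hD⟩, rfl⟩
    refine ⟨(hmem v).2 hv, ?_⟩
    intro w' hw' hwu'
    have hw : φ.symm w' ∈ commc R := by
      rw [← hmem]; simpa using hw'
    have hwu : φ.symm w' + u ∈ commc R := by
      rw [← hmem]
      simpa [map_add] using hwu'
    have := hD _ hw hwu
    have h2 := (hmem _).2 this
    simpa [map_add] using h2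
  · rintro ⟨hv', hD'⟩
    refine ⟨φ.symm v', ⟨?_, ?_⟩, by simp⟩
    · rw [← hmem]; simpa using hv'
    · intro w hw hwu
      have hw' : φ w ∈ commc R' := (hmem w).2 hw
      have hwu' : φ w + φ u ∈ commc R' := by
        rw [← map_add]; exact (hmem _).2 hwu
      have := hD' _ hw' hwu'
      rw [← hmem]
      simpa [map_add] using this

lemma subOf_mono {T T' : Set E} (h : T ⊆ T') : subOf T ⊆ subOf T' :=
  fun _ hv => hv.trans h

end Aux

theorem stmt_13 {E E' : Type*} (R : E → E → Prop) (R' : E' → E' → Prop)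
    (hsymm : Symmetric R) (hrefl : Reflexive R)
    (hsymm' : Symmetric R') (hrefl' : Reflexive R')
    (φ : (E →₀ ZMod 2) ≃ₗ[ZMod 2] (E' →₀ ZMod 2))
    (hφ : ⇑φ '' commc R = commc R') (x : E) :
    (∃ x' ∈ (φ (ind {x})).support, x ∈ (φ.symm (ind {x'})).support) ∧
    (∀ x' ∈ (φ (ind {x})).support, x ∈ (φ.symm (ind {x'})).support →
      ⇑φ '' subOf (Cop R (Cop R {x})) = subOf (Cop R' (Cop R' {x'}))) := by
  have hφ' : ⇑φ.symm '' commc R' = commc R := by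
    rw [← hφ, ← Set.image_comp]
    simp [Function.comp_def]
  constructor
  · -- existence
    by_contra hcon
    push_neg at hcon
    have hkey : (φ.symm (φ (ind {x}))) x = 0 := by
      have hrepr : φ (ind {x}) = (φ (ind {x})).sum (fun a b => Finsupp.single a b) := by
        rw [Finsupp.sum_single]
      conv_lhs => rw [hrepr]
      rw [map_finsuppSum, Finsupp.sum_apply, Finsupp.sum]
      apply Finset.sum_eq_zero
      intro x' hx'
      have hb : (φ (ind {x})) x' = 1 := by
        have hne : (φ (ind {x})) x' ≠ 0 := Finsupp.mem_support_iff.mp hx'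
        revert hne
        generalize (φ (ind {x})) x' = c
        revert c; decide
      show (φ.symm (Finsupp.single x' ((φ (ind {x})) x'))) x = 0
      rw [hb, ← ind_single]
      exact Finsupp.notMem_support_iff.mp (hcon x' hx')
    rw [φ.symm_apply_apply] at hkey
    have : (ind {x} : E →₀ ZMod 2) x ≠ 0 := by
      rw [ind_single, Finsupp.single_eq_same]; exact one_ne_zero
    exact this hkey
  · intro x' hx' hxx'
    -- step 1 : φ '' [C²{x}] = [C'²(supp φ(ind{x}))]
    have hux : φ (ind {x}) ∈ commc R' :=
      (mem_commc_image_iff φ hφ _).2 (ind_mem_commc hrefl x)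
    have h1 : ⇑φ '' subOf (Cop R (Cop R {x}))
        = subOf (Cop R' (Cop R' ↑(φ (ind {x})).support)) := by
      have e1 : subOf (Cop R (Cop R ({x} : Set E))) = Dcell R (ind {x}) := by
        rw [Dcell_eq hsymm hrefl (ind_mem_commc hrefl x), supp_ind]
      rw [e1, Dcell_image φ hφ, Dcell_eq hsymm' hrefl' hux]
    -- step 2 : φ.symm '' [C'²{x'}] = [C²(supp φ.symm(ind{x'}))]
    have hux' : φ.symm (ind {x'}) ∈ commc R := by
      rw [← hφ']
      exact ⟨ind {x'}, ind_mem_commc hrefl' x', rfl⟩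
    have h2 : ⇑φ.symm '' subOf (Cop R' (Cop R' {x'}))
        = subOf (Cop R (Cop R ↑(φ.symm (ind {x'})).support)) := by
      have e1 : subOf (Cop R' (Cop R' ({x'} : Set E'))) = Dcell R' (ind {x'}) := by
        rw [Dcell_eq hsymm' hrefl' (ind_mem_commc hrefl' x'), supp_ind]
      rw [e1, Dcell_image φ.symm hφ', Dcell_eq hsymm hrefl hux']
    apply Set.Subset.antisymm
    · -- φ '' [C²{x}] ⊆ [C'²{x'}]
      have hsub : subOf (Cop R (Cop R ({x} : Set E)))
          ⊆ ⇑φ.symm '' subOf (Cop R' (Cop R' {x'})) := by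
        rw [h2]
        apply subOf_mono
        apply cop_anti
        apply cop_anti
        rw [Set.singleton_subset_iff]
        exact hxx'
      intro v' hv'
      obtain ⟨v, hv, rfl⟩ := hv'
      obtain ⟨w', hw', hw'2⟩ := hsub hv
      have : v = φ.symm w' := hw'2.symm
      rw [this, φ.apply_symm_apply]
      exact hw'
    · -- [C'²{x'}] ⊆ φ '' [C²{x}]
      rw [h1]
      apply subOf_mono
      apply cop_anti
      apply cop_anti
      rw [Set.singleton_subset_iff]
      exact hx'
end

section
/- Let φ : [E] → [E'] be an 𝔽₂-linear isomorphism with φ([E]_c) = [E']_c, let T be a cell of (E,R), and let T' be the cell of (E',R') with φ([T]) = [T']. Then φ([T*]) = [T'*], where T* = T \ Noy(T) is the cell minus its kernel; consequently φ induces an isomorphism of the quotient spaces [T]/[T*] → [T']/[T'*]. -/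
/-- The set of cells of `(E, R)`. -/
def cells {E : Type*} (R : E → E → Prop) : Set (Set E) :=
  {T | ∃ x : E, T = Cop R (Cop R {x})}

/-- `T* = T \ Noy(T)` : the cell minus its kernel. -/
def cellStar {E : Type*} (R : E → E → Prop) (T : Set E) : Set E :=
  {y ∈ T | Cop R (Cop R {y}) ≠ T}

/-- `[T]` : the subspace of `[E] = E →₀ ZMod 2` of elements supported in `T`. -/
noncomputable def subM {E : Type*} (T : Set E) : Submodule (ZMod 2) (E →₀ ZMod 2) where
  carrier := {v | ↑v.support ⊆ T}
  zero_mem' := by simp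
  add_mem' := by
    classical
    intro a b ha hb
    intro x hx
    rcases Finset.mem_union.1 (Finsupp.support_add hx) with h | h
    · exact ha h
    · exact hb h
  smul_mem' := by
    intro c v hv
    exact subset_trans (Finset.coe_subset.2 Finsupp.support_smul) hv

section Aux

variable {E : Type*} (R : E → E → Prop)

/-- The set of "clique vectors". -/
def clq : Set (E →₀ ZMod 2) := {v | ∀ x ∈ v.support, ∀ y ∈ v.support, R x y}

/-- The invariantly-defined generating set for `[T*]`. -/
def GG (T : Set E) : Set (E →₀ ZMod 2) :=
  {v | v ∈ (subM T : Set (E →₀ ZMod 2)) ∧ ∃ w ∈ clq R, w + v ∈ clq R ∧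
    ¬ ∀ u ∈ (subM T : Set (E →₀ ZMod 2)), w + u ∈ clq R}

lemma mem_subM_iff {T : Set E} {v : E →₀ ZMod 2} :
    v ∈ (subM T : Set (E →₀ ZMod 2)) ↔ ↑v.support ⊆ T := Iff.rfl

lemma cop_singleton_mem {z y : E} : z ∈ Cop R {y} ↔ R z y := by simp [Cop]

lemma cell_clique (hs : Symmetric R) (hr : Reflexive R) {T : Set E} (hT : T ∈ cells R) :
    ∀ a ∈ T, ∀ b ∈ T, R a b := by
  obtain ⟨x, rfl⟩ := hT
  intro a ha b hb
  have hbx : b ∈ Cop R {x} := by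
    rw [cop_singleton_mem]
    exact hb x ((cop_singleton_mem R).mpr (hr x))
  exact ha b hbx

lemma self_subset_cop (hs : Symmetric R) (hr : Reflexive R) {T : Set E} (hT : T ∈ cells R) : T ⊆ Cop R T :=
  fun y hy t ht => cell_clique R hs hr hT y hy t ht

lemma noy_iff (hs : Symmetric R) (hr : Reflexive R) {T : Set E} (hT : T ∈ cells R) {y : E} (hy : y ∈ T) :
    Cop R (Cop R {y}) = T ↔ Cop R {y} ⊆ Cop R T := by
  constructor
  · intro h z hz t ht
    rw [← h] at ht
    exact hs (ht z hz)
  · intro h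
    obtain ⟨x, hTx⟩ := hT
    apply Set.Subset.antisymm
    · have hxy : Cop R {x} ⊆ Cop R {y} := by
        intro z hz
        rw [cop_singleton_mem] at hz ⊢
        exact hs ((hTx ▸ hy) z ((cop_singleton_mem R).mpr hz))
      intro u hu
      rw [hTx]
      intro t ht
      exact hu t (hxy ht)
    · intro t ht z hz
      exact hs (h hz t ht)

lemma star_iff (hs : Symmetric R) (hr : Reflexive R) {T : Set E} (hT : T ∈ cells R) {y : E} :
    y ∈ cellStar R T ↔ y ∈ T ∧ ∃ z, R z y ∧ z ∉ Cop R T := by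
  constructor
  · rintro ⟨hyT, hne⟩
    refine ⟨hyT, ?_⟩
    by_contra h
    push_neg at h
    apply hne
    rw [noy_iff R hs hr hT hyT]
    intro z hz
    exact h z ((cop_singleton_mem R).mp hz)
  · rintro ⟨hyT, z, hzy, hz⟩
    refine ⟨hyT, fun heq => hz ?_⟩
    exact ((noy_iff R hs hr hT hyT).mp heq) ((cop_singleton_mem R).mpr hzy)

lemma A_of (hs : Symmetric R) (hr : Reflexive R) {T : Set E} (hT : T ∈ cells R) {w : E →₀ ZMod 2} (hw : w ∈ clq R)
    (hQ : ∀ z ∈ w.support, z ∉ T → z ∈ Cop R T) :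
    ∀ u ∈ (subM T : Set (E →₀ ZMod 2)), w + u ∈ clq R := by
  classical
  intro u hu a ha b hb
  have hmem : ∀ c ∈ (w + u).support, c ∈ w.support ∨ c ∈ T := by
    intro c hc
    rcases Finset.mem_union.1 (Finsupp.support_add hc) with h | h
    · exact Or.inl h
    · exact Or.inr (hu h)
  have key : ∀ c, (c ∈ w.support ∨ c ∈ T) → ∀ d, (d ∈ w.support ∨ d ∈ T) → R c d := by
    intro c hc d hd
    rcases hc with hc | hc
    · rcases hd with hd | hd
      · exact hw c hc d hd
      · by_cases hcT : c ∈ T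
        · exact cell_clique R hs hr hT c hcT d hd
        · exact hQ c hc hcT d hd
    · rcases hd with hd | hd
      · by_cases hdT : d ∈ T
        · exact cell_clique R hs hr hT c hc d hdT
        · exact hs (hQ d hd hdT c hc)
      · exact cell_clique R hs hr hT c hc d hd
  exact key a (hmem a ha) b (hmem b hb)

lemma witness_of_notA (hs : Symmetric R) (hr : Reflexive R) {T : Set E} (hT : T ∈ cells R) {w : E →₀ ZMod 2} (hw : w ∈ clq R)
    (hn : ¬ ∀ u ∈ (subM T : Set (E →₀ ZMod 2)), w + u ∈ clq R) :
    ∃ z ∈ w.support, z ∉ T ∧ z ∉ Cop R T := by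
  by_contra h
  push_neg at h
  exact hn (A_of R hs hr hT hw (fun z hz hzT => h z hz hzT))

lemma star_span (hs : Symmetric R) (hr : Reflexive R) {T : Set E} (hT : T ∈ cells R) :
    subM (cellStar R T) = Submodule.span (ZMod 2) (GG R T) := by
  classical
  apply le_antisymm
  · intro v hv
    have hv' : ↑v.support ⊆ cellStar R T := hv
    rw [← Finsupp.sum_single v, Finsupp.sum]
    refine Submodule.sum_mem _ (fun y hy => Submodule.subset_span ?_)
    have hy' : y ∈ cellStar R T := hv' hy
    obtain ⟨hyT, z, hzy, hzC⟩ := (star_iff R hs hr hT).mp hy'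
    have hzT : z ∉ T := fun h => hzC (self_subset_cop R hs hr hT h)
    have hzyne : z ≠ y := fun h => hzT (h ▸ hyT)
    obtain ⟨t0, ht0T, ht0⟩ : ∃ t0 ∈ T, ¬ R z t0 := by
      by_contra h
      push_neg at h
      exact hzC h
    have hvy : v y = 1 := by
      have h0 : v y ≠ 0 := Finsupp.mem_support_iff.mp hy
      have : ∀ c : ZMod 2, c ≠ 0 → c = 1 := by decide
      exact this _ h0
    have hzt0 : z ≠ t0 := fun h => ht0 (h ▸ hr z)
    refine ⟨?_, Finsupp.single z 1, ?_, ?_, ?_⟩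
    · intro a ha
      have : a ∈ ({y} : Finset E) := Finsupp.support_single_subset ha
      rwa [Finset.mem_singleton.mp this]
    · intro a ha b hb
      have ha' := Finset.mem_singleton.mp (Finsupp.support_single_subset ha)
      have hb' := Finset.mem_singleton.mp (Finsupp.support_single_subset hb)
      rw [ha', hb']; exact hr z
    · intro a ha b hb
      rw [hvy] at ha hb
      have hsub : (Finsupp.single z 1 + Finsupp.single y (1 : ZMod 2)).support ⊆ {z, y} := by
        refine (Finsupp.support_add).trans ?_
        apply Finset.union_subset
        · exact Finsupp.support_single_subset.trans (by simp)
        · exact Finsupp.support_single_subset.trans (by simp)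
      have ha' := hsub ha
      have hb' := hsub hb
      simp only [Finset.mem_insert, Finset.mem_singleton] at ha' hb'
      rcases ha' with rfl | rfl <;> rcases hb' with rfl | rfl
      · exact hr _
      · exact hzy
      · exact hs hzy
      · exact hr _
    · intro hA
      have hu : ↑(Finsupp.single t0 (1 : ZMod 2)).support ⊆ T := by
        intro a ha
        have := Finset.mem_singleton.mp (Finsupp.support_single_subset ha)
        rwa [this]
      have hcl := hA (Finsupp.single t0 1) hu
      have hzm : z ∈ (Finsupp.single z 1 + Finsupp.single t0 (1 : ZMod 2)).support := by
        rw [Finsupp.mem_support_iff, Finsupp.add_apply]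
        simp [Finsupp.single_apply, hzt0, hzt0.symm]
      have ht0m : t0 ∈ (Finsupp.single z 1 + Finsupp.single t0 (1 : ZMod 2)).support := by
        rw [Finsupp.mem_support_iff, Finsupp.add_apply]
        simp [Finsupp.single_apply, hzt0, hzt0.symm]
      exact ht0 (hcl z hzm t0 ht0m)
  · rw [Submodule.span_le]
    rintro v ⟨hvT, w, hw, hwv, hnA⟩
    obtain ⟨z, hzsupp, hzT, hzC⟩ := witness_of_notA R hs hr hT hw hnA
    intro y hy
    have hyT : y ∈ T := hvT hy
    rw [star_iff R hs hr hT]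
    refine ⟨hyT, z, ?_, hzC⟩
    by_cases hyw : y ∈ w.support
    · exact hw z hzsupp y hyw
    · have hy' : y ∈ (w + v).support := by
        rw [Finsupp.mem_support_iff, Finsupp.add_apply,
          Finsupp.notMem_support_iff.mp hyw, zero_add]
        exact Finsupp.mem_support_iff.mp hy
      have hz' : z ∈ (w + v).support := by
        have hzv : v z = 0 := by
          rw [← Finsupp.notMem_support_iff]
          exact fun h => hzT (hvT h)
        rw [Finsupp.mem_support_iff, Finsupp.add_apply, hzv, add_zero]
        exact Finsupp.mem_support_iff.mp hzsupp
      exact hwv z hz' y hy'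

end Aux

theorem stmt_15 {E E' : Type*} (R : E → E → Prop) (R' : E' → E' → Prop)
    (hsymm : Symmetric R) (hrefl : Reflexive R)
    (hsymm' : Symmetric R') (hrefl' : Reflexive R')
    (φ : (E →₀ ZMod 2) ≃ₗ[ZMod 2] (E' →₀ ZMod 2))
    (hφ : ⇑φ '' {v : E →₀ ZMod 2 | ∀ x ∈ v.support, ∀ y ∈ v.support, R x y} =
      {w : E' →₀ ZMod 2 | ∀ x ∈ w.support, ∀ y ∈ w.support, R' x y})
    (T : Set E) (hT : T ∈ cells R) (T' : Set E') (hT' : T' ∈ cells R')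
    (himg : ⇑φ '' (subM T : Set (E →₀ ZMod 2)) = (subM T' : Set (E' →₀ ZMod 2))) :
    ⇑φ '' (subM (cellStar R T) : Set (E →₀ ZMod 2)) =
      (subM (cellStar R' T') : Set (E' →₀ ZMod 2)) ∧
    ∃ e : (subM T ⧸ ((subM (cellStar R T)).comap (subM T).subtype :
            Submodule (ZMod 2) ↥(subM T))) ≃ₗ[ZMod 2]
        (subM T' ⧸ ((subM (cellStar R' T')).comap (subM T').subtype :
            Submodule (ZMod 2) ↥(subM T'))),
      ∀ (v : subM T) (w : subM T'), (w : E' →₀ ZMod 2) = φ (v : E →₀ ZMod 2) →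
        e (Submodule.Quotient.mk v) = Submodule.Quotient.mk w := by
  classical
  have hφ' : ⇑φ '' clq R = clq R' := hφ
  -- image of the generating set
  have hGG : ⇑φ '' GG R T = GG R' T' := by
    ext v'
    constructor
    · rintro ⟨v, ⟨hvT, w, hw, hwv, hnA⟩, rfl⟩
      refine ⟨by rw [← himg]; exact ⟨v, hvT, rfl⟩, φ w,
        by rw [← hφ']; exact ⟨w, hw, rfl⟩, ?_, ?_⟩
      · rw [← hφ']; exact ⟨w + v, hwv, map_add φ w v⟩
      · intro hA
        apply hnA
        intro u huT
        have h1 : φ w + φ u ∈ clq R' := hA (φ u) (by rw [← himg]; exact ⟨u, huT, rfl⟩)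
        rw [← map_add, ← hφ'] at h1
        obtain ⟨c, hc, hce⟩ := h1
        rwa [← φ.injective hce]
    · rintro ⟨hvT', w', hw', hwv', hnA'⟩
      obtain ⟨v, hvT, rfl⟩ : v' ∈ ⇑φ '' (subM T : Set (E →₀ ZMod 2)) := by
        rw [himg]; exact hvT'
      rw [← hφ'] at hw'
      obtain ⟨w, hw, rfl⟩ := hw'
      refine ⟨v, ⟨hvT, w, hw, ?_, ?_⟩, rfl⟩
      · have h1 : φ (w + v) ∈ ⇑φ '' clq R := by
          rw [hφ', map_add]; exact hwv'
        obtain ⟨c, hc, hce⟩ := h1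
        rwa [φ.injective hce] at hc
      · intro hA
        apply hnA'
        intro u' huT'
        obtain ⟨u, huT, rfl⟩ : u' ∈ ⇑φ '' (subM T : Set (E →₀ ZMod 2)) := by
          rw [himg]; exact huT'
        rw [← map_add, ← hφ']
        exact ⟨w + u, hA u huT, rfl⟩
  have hspan := star_span R hsymm hrefl hT
  have hspan' := star_span R' hsymm' hrefl' hT'
  have hmap : Submodule.map (φ : (E →₀ ZMod 2) →ₗ[ZMod 2] (E' →₀ ZMod 2))
      (subM (cellStar R T)) = subM (cellStar R' T') := by
    rw [hspan, hspan', Submodule.map_span]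
    simp only [LinearEquiv.coe_coe]
    rw [hGG]
  have hsetstar : ⇑φ '' (subM (cellStar R T) : Set (E →₀ ZMod 2)) =
      (subM (cellStar R' T') : Set (E' →₀ ZMod 2)) := by
    rw [← hmap, Submodule.map_coe]
    rfl
  refine ⟨hsetstar, ?_⟩
  have hmapT : Submodule.map (φ : (E →₀ ZMod 2) →ₗ[ZMod 2] (E' →₀ ZMod 2)) (subM T)
      = subM T' := by
    apply SetLike.ext'
    rw [Submodule.map_coe]
    exact himg
  let ψ : ↥(subM T) ≃ₗ[ZMod 2] ↥(subM T') :=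
    (φ.submoduleMap (subM T)).trans (LinearEquiv.ofEq _ _ hmapT)
  have hψ : ∀ v : ↥(subM T), ((ψ v : E' →₀ ZMod 2)) = φ (v : E →₀ ZMod 2) := by
    intro v
    rfl
  have hcomap : Submodule.map (ψ : ↥(subM T) →ₗ[ZMod 2] ↥(subM T'))
      ((subM (cellStar R T)).comap (subM T).subtype)
      = (subM (cellStar R' T')).comap (subM T').subtype := by
    ext w
    simp only [Submodule.mem_map, Submodule.mem_comap, Submodule.subtype_apply, LinearEquiv.coe_coe]
    constructor
    · rintro ⟨x, hx, rfl⟩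
      rw [hψ]
      rw [← hmap]
      exact Submodule.mem_map_of_mem hx
    · intro hw
      refine ⟨ψ.symm w, ?_, by simp⟩
      have h1 : φ ((ψ.symm w : E →₀ ZMod 2)) = (w : E' →₀ ZMod 2) := by
        rw [← hψ (ψ.symm w), ψ.apply_symm_apply]
      rw [← hmap] at hw
      obtain ⟨a, ha, hae⟩ := hw
      have : a = (ψ.symm w : E →₀ ZMod 2) := φ.injective (hae.trans h1.symm)
      rwa [← this]
  refine ⟨Submodule.Quotient.equiv _ _ ψ hcomap, ?_⟩
  intro v w hvw
  have hwv : w = ψ v := Subtype.ext (by rw [hvw, hψ])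
  rw [hwv]
  rfl
end

section
/- If (E,R) and (E',R') are sets equipped with symmetric reflexive binary relations and there exists an 𝔽₂-linear isomorphism of [E] onto [E'] mapping [E]_c onto [E']_c, then there exists a bijection f : E → E' with x R y ⇔ f(x) R' f(y); i.e., (E,R) and (E',R') are isomorphic. -/
namespace Stmt16
open Finsupp Submodule

variable {E E' : Type*}

noncomputable def sgl (x : E) : E →₀ ZMod 2 := Finsupp.single x 1

def Nset (R : E → E → Prop) (v : E →₀ ZMod 2) : Set E := {x | ∀ y ∈ v.support, R x y}

def Tset (R : E → E → Prop) (v : E →₀ ZMod 2) : Set E := {x | Nset R (sgl x) = Nset R v}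
def Kset (R : E → E → Prop) (v : E →₀ ZMod 2) : Set E := {x | Nset R v ⊆ Nset R (sgl x)}
def Wset (R : E → E → Prop) (v : E →₀ ZMod 2) : Set E :=
  {x | ∃ u, u ∈ commc R ∧ Nset R v ⊂ Nset R u ∧ Nset R u ⊆ Nset R (sgl x)}

variable {R : E → E → Prop}

lemma mem_commc {v : E →₀ ZMod 2} :
    v ∈ commc R ↔ ∀ x ∈ v.support, ∀ y ∈ v.support, R x y := by
  constructor
  · intro h x hx y hy; exact h x (Finset.mem_coe.mpr hx) y (Finset.mem_coe.mpr hy)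
  · intro h x hx y hy; exact h x (Finset.mem_coe.mp hx) y (Finset.mem_coe.mp hy)

lemma support_sgl (x : E) : (sgl x : E →₀ ZMod 2).support = {x} :=
  Finsupp.support_single_ne_zero x one_ne_zero

lemma sgl_mem_commc (hrefl : Reflexive R) (x : E) : sgl x ∈ commc R := by
  rw [mem_commc]
  intro a ha b hb
  rw [support_sgl, Finset.mem_singleton] at ha hb
  subst ha; subst hb; exact hrefl _

lemma mem_Nset {a : E} {v : E →₀ ZMod 2} : a ∈ Nset R v ↔ ∀ y ∈ v.support, R a y := Iff.rfl

lemma mem_Nset_sgl {a x : E} : a ∈ Nset R (sgl x) ↔ R a x := by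
  rw [mem_Nset]
  constructor
  · intro h; exact h x (by rw [support_sgl]; exact Finset.mem_singleton_self x)
  · intro h y hy
    rw [support_sgl, Finset.mem_singleton] at hy; subst hy; exact h

lemma support_subset_Nset {v : E →₀ ZMod 2} (hv : v ∈ commc R) :
    ↑v.support ⊆ Nset R v := fun x hx => mem_Nset.mpr (fun y hy => mem_commc.mp hv x hx y hy)

lemma Nset_subset_sgl {v : E →₀ ZMod 2} {z : E} (hz : z ∈ v.support) :
    Nset R v ⊆ Nset R (sgl z) := by
  intro a ha
  exact mem_Nset_sgl.mpr (mem_Nset.mp ha z hz)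

lemma add_mem_commc_iff (hsymm : Symmetric R) {v w : E →₀ ZMod 2}
    (hv : v ∈ commc R) (hw : w ∈ commc R) :
    v + w ∈ commc R ↔ ↑w.support ⊆ Nset R v := by
  classical
  constructor
  · intro h y hy
    replace hy : y ∈ w.support := hy
    rw [mem_Nset]
    intro x hx
    by_cases hxw : x ∈ w.support
    · exact mem_commc.mp hw y hy x hxw
    · have hxvw : x ∈ (v + w).support := by
        rw [Finsupp.mem_support_iff] at hx ⊢
        rw [Finsupp.add_apply, Finsupp.notMem_support_iff.mp hxw, add_zero]
        exact hx
      by_cases hyv : y ∈ v.support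
      · exact mem_commc.mp hv y hyv x hx
      · have hyvw : y ∈ (v + w).support := by
          rw [Finsupp.mem_support_iff] at hy ⊢
          rw [Finsupp.add_apply, Finsupp.notMem_support_iff.mp hyv, zero_add]
          exact hy
        exact mem_commc.mp h y hyvw x hxvw
  · intro h
    rw [mem_commc]
    have hsupp : ∀ c, c ∈ (v + w).support → c ∈ v.support ∨ c ∈ w.support := by
      intro c hc
      have := Finsupp.support_add (g₁ := v) (g₂ := w) hc
      rwa [Finset.mem_union] at this
    have hcross : ∀ a ∈ v.support, ∀ b ∈ w.support, R a b := by
      intro a ha b hb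
      have := mem_Nset.mp (h (Finset.mem_coe.mpr hb)) a ha
      exact hsymm this
    intro a ha b hb
    rcases hsupp a ha with h1 | h1 <;> rcases hsupp b hb with h2 | h2
    · exact mem_commc.mp hv a h1 b h2
    · exact hcross a h1 b h2
    · exact hsymm (hcross b h2 a h1)
    · exact mem_commc.mp hw a h1 b h2

lemma support_subset_Nset_comm (hsymm : Symmetric R) {v w : E →₀ ZMod 2}
    (hv : v ∈ commc R) (hw : w ∈ commc R) :
    ↑w.support ⊆ Nset R v ↔ ↑v.support ⊆ Nset R w := by
  rw [← add_mem_commc_iff hsymm hv hw, ← add_mem_commc_iff hsymm hw hv, add_comm]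

lemma add_mem_commc_congr (hsymm : Symmetric R) {v w v₁ w₁ : E →₀ ZMod 2}
    (hv : v ∈ commc R) (hw : w ∈ commc R) (hv₁ : v₁ ∈ commc R) (hw₁ : w₁ ∈ commc R)
    (hN : Nset R v = Nset R v₁) (hN' : Nset R w = Nset R w₁) :
    v + w ∈ commc R ↔ v₁ + w₁ ∈ commc R := by
  rw [add_mem_commc_iff hsymm hv hw, add_mem_commc_iff hsymm hv₁ hw₁]
  constructor
  · intro h
    have h1 : ↑w.support ⊆ Nset R v₁ := hN ▸ h
    have h2 : ↑v₁.support ⊆ Nset R w := (support_subset_Nset_comm hsymm hv₁ hw).mp h1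
    have h3 : ↑v₁.support ⊆ Nset R w₁ := hN' ▸ h2
    exact (support_subset_Nset_comm hsymm hw₁ hv₁).mp h3
  · intro h
    have h1 : ↑w₁.support ⊆ Nset R v := hN ▸ h
    have h2 : ↑v.support ⊆ Nset R w₁ := (support_subset_Nset_comm hsymm hv hw₁).mp h1
    have h3 : ↑v.support ⊆ Nset R w := hN' ▸ h2
    exact (support_subset_Nset_comm hsymm hw hv).mp h3

lemma sgl_add_sgl_mem_commc (hsymm : Symmetric R) (hrefl : Reflexive R) (x y : E) :
    sgl x + sgl y ∈ commc R ↔ R x y := by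
  rw [add_mem_commc_iff hsymm (sgl_mem_commc hrefl x) (sgl_mem_commc hrefl y)]
  constructor
  · intro h
    have : y ∈ Nset R (sgl x) :=
      h (by rw [support_sgl]; exact Finset.mem_coe.mpr (Finset.mem_singleton_self y))
    exact hsymm (mem_Nset_sgl.mp this)
  · intro h z hz
    replace hz : z ∈ (sgl y).support := hz
    rw [support_sgl, Finset.mem_singleton] at hz
    subst hz
    exact mem_Nset_sgl.mpr (hsymm h)

section Span

lemma span_eq_supported (hrefl : Reflexive R) (A : Set E) (S : Set (E →₀ ZMod 2))
    (hS : ∀ w ∈ S, ↑w.support ⊆ A) (hA : ∀ x ∈ A, sgl x ∈ S) :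
    Submodule.span (ZMod 2) S = Finsupp.supported (ZMod 2) (ZMod 2) A := by
  apply le_antisymm
  · rw [Submodule.span_le]
    intro w hw
    exact (Finsupp.mem_supported _ _).mpr (hS w hw)
  · rw [Finsupp.supported_eq_span_single]
    apply Submodule.span_mono
    rintro _ ⟨x, hx, rfl⟩
    exact hA x hx

lemma span_FF (hsymm : Symmetric R) (hrefl : Reflexive R) {v : E →₀ ZMod 2}
    (hv : v ∈ commc R) :
    Submodule.span (ZMod 2) {w | w ∈ commc R ∧ v + w ∈ commc R}
      = Finsupp.supported (ZMod 2) (ZMod 2) (Nset R v) := by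
  apply span_eq_supported hrefl
  · rintro w ⟨hw1, hw2⟩
    exact (add_mem_commc_iff hsymm hv hw1).mp hw2
  · intro x hx
    refine ⟨sgl_mem_commc hrefl x, ?_⟩
    rw [add_mem_commc_iff hsymm hv (sgl_mem_commc hrefl x)]
    intro z hz
    replace hz : z ∈ (sgl x).support := hz
    rw [support_sgl, Finset.mem_singleton] at hz
    subst hz; exact hx

lemma span_KF (hrefl : Reflexive R) {v : E →₀ ZMod 2} :
    Submodule.span (ZMod 2) {w | w ∈ commc R ∧ Nset R v ⊆ Nset R w}
      = Finsupp.supported (ZMod 2) (ZMod 2) (Kset R v) := by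
  apply span_eq_supported hrefl
  · rintro w ⟨hw1, hw2⟩ z hz
    replace hz : z ∈ w.support := hz
    exact hw2.trans (Nset_subset_sgl hz)
  · intro x hx
    exact ⟨sgl_mem_commc hrefl x, hx⟩

lemma span_WF (hrefl : Reflexive R) {v : E →₀ ZMod 2} :
    Submodule.span (ZMod 2)
        {w | w ∈ commc R ∧ ∃ u, u ∈ commc R ∧ Nset R v ⊂ Nset R u ∧ Nset R u ⊆ Nset R w}
      = Finsupp.supported (ZMod 2) (ZMod 2) (Wset R v) := by
  apply span_eq_supported hrefl
  · rintro w ⟨hw1, u, hu1, hu2, hu3⟩ z hz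
    replace hz : z ∈ w.support := hz
    exact ⟨u, hu1, hu2, hu3.trans (Nset_subset_sgl hz)⟩
  · rintro x ⟨u, hu1, hu2, hu3⟩
    exact ⟨sgl_mem_commc hrefl x, u, hu1, hu2, hu3⟩

lemma supported_le_iff {A B : Set E} :
    Finsupp.supported (ZMod 2) (ZMod 2) A ≤ Finsupp.supported (ZMod 2) (ZMod 2) B ↔ A ⊆ B := by
  constructor
  · intro h x hx
    have h1 : (sgl x : E →₀ ZMod 2) ∈ Finsupp.supported (ZMod 2) (ZMod 2) A :=
      Finsupp.single_mem_supported (ZMod 2) 1 hx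
    have h2 := (Finsupp.mem_supported _ _).mp (h h1)
    apply h2
    rw [support_sgl]
    exact Finset.mem_coe.mpr (Finset.mem_singleton_self x)
  · exact Finsupp.supported_mono

end Span

section Phi

variable {R' : E' → E' → Prop} {φ : (E →₀ ZMod 2) ≃ₗ[ZMod 2] (E' →₀ ZMod 2)}

lemma map_supported_N (hsymm : Symmetric R) (hrefl : Reflexive R)
    (hsymm' : Symmetric R') (hrefl' : Reflexive R')
    (hφ : ∀ v, v ∈ commc R ↔ φ v ∈ commc R') {v : E →₀ ZMod 2} (hv : v ∈ commc R) :
    Submodule.map (φ : (E →₀ ZMod 2) →ₗ[ZMod 2] (E' →₀ ZMod 2))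
        (Finsupp.supported (ZMod 2) (ZMod 2) (Nset R v))
      = Finsupp.supported (ZMod 2) (ZMod 2) (Nset R' (φ v)) := by
  rw [← span_FF hsymm hrefl hv, ← span_FF hsymm' hrefl' ((hφ v).mp hv), Submodule.map_span]
  congr 1
  ext w'
  constructor
  · rintro ⟨w, ⟨hw1, hw2⟩, rfl⟩
    exact ⟨(hφ w).mp hw1, by simpa using (hφ _).mp hw2⟩
  · rintro ⟨h1, h2⟩
    refine ⟨φ.symm w', ⟨(hφ _).mpr (by simpa using h1), (hφ _).mpr ?_⟩, by simp⟩
    rw [map_add]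
    simpa using h2

lemma Nsubset_iff_phi (hsymm : Symmetric R) (hrefl : Reflexive R)
    (hsymm' : Symmetric R') (hrefl' : Reflexive R')
    (hφ : ∀ v, v ∈ commc R ↔ φ v ∈ commc R') {v w : E →₀ ZMod 2}
    (hv : v ∈ commc R) (hw : w ∈ commc R) :
    Nset R v ⊆ Nset R w ↔ Nset R' (φ v) ⊆ Nset R' (φ w) := by
  rw [← supported_le_iff, ← supported_le_iff,
    ← map_supported_N hsymm hrefl hsymm' hrefl' hφ hv,
    ← map_supported_N hsymm hrefl hsymm' hrefl' hφ hw]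
  exact (Submodule.map_le_map_iff_of_injective φ.injective _ _).symm

lemma Neq_iff_phi (hsymm : Symmetric R) (hrefl : Reflexive R)
    (hsymm' : Symmetric R') (hrefl' : Reflexive R')
    (hφ : ∀ v, v ∈ commc R ↔ φ v ∈ commc R') {v w : E →₀ ZMod 2}
    (hv : v ∈ commc R) (hw : w ∈ commc R) :
    Nset R v = Nset R w ↔ Nset R' (φ v) = Nset R' (φ w) := by
  rw [Set.Subset.antisymm_iff, Set.Subset.antisymm_iff,
    Nsubset_iff_phi hsymm hrefl hsymm' hrefl' hφ hv hw,
    Nsubset_iff_phi hsymm hrefl hsymm' hrefl' hφ hw hv]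

lemma Nssubset_iff_phi (hsymm : Symmetric R) (hrefl : Reflexive R)
    (hsymm' : Symmetric R') (hrefl' : Reflexive R')
    (hφ : ∀ v, v ∈ commc R ↔ φ v ∈ commc R') {v w : E →₀ ZMod 2}
    (hv : v ∈ commc R) (hw : w ∈ commc R) :
    Nset R v ⊂ Nset R w ↔ Nset R' (φ v) ⊂ Nset R' (φ w) := by
  rw [Set.ssubset_def, Set.ssubset_def,
    Nsubset_iff_phi hsymm hrefl hsymm' hrefl' hφ hv hw,
    Nsubset_iff_phi hsymm hrefl hsymm' hrefl' hφ hw hv]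

lemma map_supported_K (hsymm : Symmetric R) (hrefl : Reflexive R)
    (hsymm' : Symmetric R') (hrefl' : Reflexive R')
    (hφ : ∀ v, v ∈ commc R ↔ φ v ∈ commc R') {v : E →₀ ZMod 2} (hv : v ∈ commc R) :
    Submodule.map (φ : (E →₀ ZMod 2) →ₗ[ZMod 2] (E' →₀ ZMod 2))
        (Finsupp.supported (ZMod 2) (ZMod 2) (Kset R v))
      = Finsupp.supported (ZMod 2) (ZMod 2) (Kset R' (φ v)) := by
  rw [← span_KF hrefl (v := v), ← span_KF hrefl' (v := φ v), Submodule.map_span]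
  congr 1
  ext w'
  constructor
  · rintro ⟨w, ⟨hw1, hw2⟩, rfl⟩
    exact ⟨(hφ w).mp hw1,
      (Nsubset_iff_phi hsymm hrefl hsymm' hrefl' hφ hv hw1).mp hw2⟩
  · rintro ⟨h1, h2⟩
    have h1' : φ.symm w' ∈ commc R := (hφ _).mpr (by simpa using h1)
    refine ⟨φ.symm w', ⟨h1', ?_⟩, by simp⟩
    rw [Nsubset_iff_phi hsymm hrefl hsymm' hrefl' hφ hv h1']
    simpa using h2

lemma map_supported_W (hsymm : Symmetric R) (hrefl : Reflexive R)
    (hsymm' : Symmetric R') (hrefl' : Reflexive R')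
    (hφ : ∀ v, v ∈ commc R ↔ φ v ∈ commc R') {v : E →₀ ZMod 2} (hv : v ∈ commc R) :
    Submodule.map (φ : (E →₀ ZMod 2) →ₗ[ZMod 2] (E' →₀ ZMod 2))
        (Finsupp.supported (ZMod 2) (ZMod 2) (Wset R v))
      = Finsupp.supported (ZMod 2) (ZMod 2) (Wset R' (φ v)) := by
  rw [← span_WF hrefl (v := v), ← span_WF hrefl' (v := φ v), Submodule.map_span]
  congr 1
  ext w'
  constructor
  · rintro ⟨w, ⟨hw1, u, hu1, hu2, hu3⟩, rfl⟩
    exact ⟨(hφ w).mp hw1, φ u, (hφ u).mp hu1,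
      (Nssubset_iff_phi hsymm hrefl hsymm' hrefl' hφ hv hu1).mp hu2,
      (Nsubset_iff_phi hsymm hrefl hsymm' hrefl' hφ hu1 hw1).mp hu3⟩
  · rintro ⟨h1, u', hu1, hu2, hu3⟩
    have h1' : φ.symm w' ∈ commc R := (hφ _).mpr (by simpa using h1)
    have hu1' : φ.symm u' ∈ commc R := (hφ _).mpr (by simpa using hu1)
    refine ⟨φ.symm w', ⟨h1', φ.symm u', hu1', ?_, ?_⟩, by simp⟩
    · rw [Nssubset_iff_phi hsymm hrefl hsymm' hrefl' hφ hv hu1']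
      simpa using hu2
    · rw [Nsubset_iff_phi hsymm hrefl hsymm' hrefl' hφ hu1' h1']
      simpa using hu3

end Phi

section Partition

lemma Wset_subset_Kset {v : E →₀ ZMod 2} : Wset R v ⊆ Kset R v := by
  rintro x ⟨u, hu1, hu2, hu3⟩
  exact hu2.1.trans hu3

lemma Kset_diff_Wset (hrefl : Reflexive R) (v : E →₀ ZMod 2) :
    Kset R v \ Wset R v = Tset R v := by
  ext x
  constructor
  · rintro ⟨hK, hnW⟩
    have hx : Nset R (sgl x) ⊆ Nset R v := by
      by_contra hc
      exact hnW ⟨sgl x, sgl_mem_commc hrefl x, ⟨hK, hc⟩, subset_refl _⟩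
    exact Set.Subset.antisymm hx hK
  · intro hT
    replace hT : Nset R (sgl x) = Nset R v := hT
    constructor
    · exact hT.symm.le
    · rintro ⟨u, hu1, hu2, hu3⟩
      rw [← hT] at hu2
      exact hu2.2 hu3

end Partition

section Quot

lemma quot_equiv_finsupp (K W : Set E) (hWK : W ⊆ K) :
    Nonempty ((↥((Finsupp.supported (ZMod 2) (ZMod 2) K).map
          (Finsupp.supported (ZMod 2) (ZMod 2) W).mkQ))
        ≃ₗ[ZMod 2] ((K \ W : Set E) →₀ ZMod 2)) := by
  classical
  set T : Set E := K \ W with hT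
  set sW := Finsupp.supported (ZMod 2) (ZMod 2) W with hsW
  set sK := Finsupp.supported (ZMod 2) (ZMod 2) K with hsK
  have hker : sW ≤ LinearMap.ker (Finsupp.lsubtypeDomain (M := ZMod 2) (R := ZMod 2) T) := by
    intro f hf
    rw [LinearMap.mem_ker, Finsupp.lsubtypeDomain_apply]
    ext a
    rw [Finsupp.subtypeDomain_apply, Finsupp.coe_zero, Pi.zero_apply]
    by_contra hfa
    have : (a : E) ∈ W := (Finsupp.mem_supported _ _).mp hf (Finsupp.mem_support_iff.mpr hfa)
    exact a.2.2 this
  set lam : ((E →₀ ZMod 2) ⧸ sW) →ₗ[ZMod 2] (T →₀ ZMod 2) := sW.liftQ _ hker with hlam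
  set P := sK.map sW.mkQ with hP
  set mu : P →ₗ[ZMod 2] (T →₀ ZMod 2) := lam.comp P.subtype with hmu
  have hbij : Function.Bijective mu := by
    constructor
    · rw [← LinearMap.ker_eq_bot]
      rw [Submodule.eq_bot_iff]
      rintro ⟨p, hp⟩ hker0
      obtain ⟨f, hf, rfl⟩ := hp
      rw [LinearMap.mem_ker, hmu, LinearMap.comp_apply, Submodule.subtype_apply] at hker0
      simp only [hlam] at hker0
      rw [Submodule.mkQ_apply, Submodule.liftQ_apply] at hker0
      have hfW : f ∈ sW := by
        rw [hsW, Finsupp.mem_supported]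
        intro z hz
        replace hz : z ∈ f.support := hz
        have hzK : z ∈ K := (Finsupp.mem_supported _ _).mp hf (Finset.mem_coe.mpr hz)
        by_contra hzW
        have hzT : z ∈ T := ⟨hzK, hzW⟩
        have : f z = 0 := by
          have h9 := congrArg (fun g => g ⟨z, hzT⟩) hker0
          simpa [Finsupp.lsubtypeDomain_apply, Finsupp.subtypeDomain_apply] using h9
        exact Finsupp.mem_support_iff.mp hz this
      rw [← Submodule.Quotient.mk_eq_zero, ← Submodule.mkQ_apply] at hfW
      exact Subtype.ext hfW
    · intro g
      set emb : T ↪ E := Function.Embedding.subtype _ with hemb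
      set f : E →₀ ZMod 2 := Finsupp.embDomain emb g with hf
      have hfK : f ∈ sK := by
        rw [hsK, Finsupp.mem_supported]
        intro z hz
        replace hz : z ∈ f.support := hz
        rw [hf, Finsupp.support_embDomain, Finset.mem_map] at hz
        obtain ⟨a, ha, rfl⟩ := hz
        exact a.2.1
      refine ⟨⟨sW.mkQ f, Submodule.mem_map_of_mem hfK⟩, ?_⟩
      rw [hmu, LinearMap.comp_apply, Submodule.subtype_apply]
      simp only [hlam]
      rw [Submodule.mkQ_apply, Submodule.liftQ_apply]
      ext a
      rw [Finsupp.lsubtypeDomain_apply, Finsupp.subtypeDomain_apply]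
      conv_lhs => rw [show (a : E) = emb a from rfl]
      rw [Finsupp.embDomain_apply_self]
  exact ⟨LinearEquiv.ofBijective mu hbij⟩

end Quot

section Card

variable {R' : E' → E' → Prop} {φ : (E →₀ ZMod 2) ≃ₗ[ZMod 2] (E' →₀ ZMod 2)}

lemma tset_equiv (hsymm : Symmetric R) (hrefl : Reflexive R)
    (hsymm' : Symmetric R') (hrefl' : Reflexive R')
    (hφ : ∀ v, v ∈ commc R ↔ φ v ∈ commc R') {v : E →₀ ZMod 2} (hv : v ∈ commc R) :
    Nonempty (↥(Tset R v) ≃ ↥(Tset R' (φ v))) := by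
  classical
  set sW := Finsupp.supported (ZMod 2) (ZMod 2) (Wset R v) with hsW
  set sK := Finsupp.supported (ZMod 2) (ZMod 2) (Kset R v) with hsK
  set sW' := Finsupp.supported (ZMod 2) (ZMod 2) (Wset R' (φ v)) with hsW'
  set sK' := Finsupp.supported (ZMod 2) (ZMod 2) (Kset R' (φ v)) with hsK'
  have hmapW : sW.map (φ : (E →₀ ZMod 2) →ₗ[ZMod 2] (E' →₀ ZMod 2)) = sW' :=
    map_supported_W hsymm hrefl hsymm' hrefl' hφ hv
  have hmapK : sK.map (φ : (E →₀ ZMod 2) →ₗ[ZMod 2] (E' →₀ ZMod 2)) = sK' :=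
    map_supported_K hsymm hrefl hsymm' hrefl' hφ hv
  set Φq : ((E →₀ ZMod 2) ⧸ sW) ≃ₗ[ZMod 2] ((E' →₀ ZMod 2) ⧸ sW') :=
    Submodule.Quotient.equiv sW sW' φ hmapW with hΦq
  set P := sK.map sW.mkQ with hP
  set P' := sK'.map sW'.mkQ with hP'
  have hcomp : (Φq : ((E →₀ ZMod 2) ⧸ sW) →ₗ[ZMod 2] ((E' →₀ ZMod 2) ⧸ sW')) ∘ₗ sW.mkQ
      = sW'.mkQ ∘ₗ (φ : (E →₀ ZMod 2) →ₗ[ZMod 2] (E' →₀ ZMod 2)) := by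
    ext f
    simp [hΦq, Submodule.Quotient.equiv, Submodule.mapQ_apply]
  have hPmap : P.map (Φq : ((E →₀ ZMod 2) ⧸ sW) →ₗ[ZMod 2] ((E' →₀ ZMod 2) ⧸ sW')) = P' := by
    rw [hP, ← Submodule.map_comp, hcomp, Submodule.map_comp, hmapK, hP']
  have eP : ↥P ≃ₗ[ZMod 2] ↥P' := (Φq.submoduleMap P).trans (LinearEquiv.ofEq _ _ hPmap)
  obtain ⟨e1⟩ := quot_equiv_finsupp (Kset R v) (Wset R v) Wset_subset_Kset
  obtain ⟨e2⟩ := quot_equiv_finsupp (Kset R' (φ v)) (Wset R' (φ v)) Wset_subset_Kset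
  have e3 : ((Kset R v \ Wset R v : Set E) →₀ ZMod 2)
      ≃ₗ[ZMod 2] ((Kset R' (φ v) \ Wset R' (φ v) : Set E') →₀ ZMod 2) :=
    e1.symm.trans (eP.trans e2)
  have b1 : Module.Basis ↥(Kset R v \ Wset R v) (ZMod 2)
      ((Kset R v \ Wset R v : Set E) →₀ ZMod 2) := Finsupp.basisSingleOne
  have b2 : Module.Basis ↥(Kset R' (φ v) \ Wset R' (φ v)) (ZMod 2)
      ((Kset R v \ Wset R v : Set E) →₀ ZMod 2) := Finsupp.basisSingleOne.map e3.symm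
  have hcard := mk_eq_mk_of_basis b1 b2
  rw [Kset_diff_Wset hrefl v] at hcard
  rw [Kset_diff_Wset hrefl' (φ v)] at hcard
  exact Cardinal.lift_mk_eq'.mp hcard

end Card

end Stmt16

open Stmt16

theorem stmt_16 {E E' : Type*} (R : E → E → Prop) (R' : E' → E' → Prop)
    (hsymm : Symmetric R) (hrefl : Reflexive R)
    (hsymm' : Symmetric R') (hrefl' : Reflexive R')
    (φ : (E →₀ ZMod 2) ≃ₗ[ZMod 2] (E' →₀ ZMod 2))
    (hφ : ⇑φ '' commc R = commc R') :
    ∃ f : E ≃ E', ∀ x y : E, R x y ↔ R' (f x) (f y) := by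
  classical
  have hφ' : ∀ v, v ∈ commc R ↔ φ v ∈ commc R' := by
    intro v
    constructor
    · intro hv; rw [← hφ]; exact Set.mem_image_of_mem _ hv
    · intro hv
      rw [← hφ] at hv
      obtain ⟨u, hu, huv⟩ := hv
      rwa [← φ.injective huv]
  have hφsymm : ∀ v', v' ∈ commc R' → φ.symm v' ∈ commc R := by
    intro v' hv'
    rw [hφ' (φ.symm v'), LinearEquiv.apply_symm_apply]
    exact hv'
  set npt : E → Set E := fun x => Nset R (sgl x) with hnpt
  set gg : E' → Set E := fun x' => Nset R (φ.symm (sgl x')) with hgg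
  have NE : ∀ A : Set E, Nonempty ({x // npt x = A} ≃ {x' // gg x' = A}) := by
    intro A
    by_cases hA : ∃ x, Nset R (sgl x) = A
    · obtain ⟨x, hx⟩ := hA
      subst hx
      have hsx : sgl x ∈ commc R := sgl_mem_commc hrefl x
      obtain ⟨e0⟩ := tset_equiv hsymm hrefl hsymm' hrefl' hφ' hsx
      have e4 : {z // npt z = npt x} ≃ ↥(Tset R (sgl x)) :=
        Equiv.subtypeEquivRight (fun z => Iff.rfl)
      have e5 : ↥(Tset R' (φ (sgl x))) ≃ {x' // gg x' = npt x} := by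
        apply Equiv.subtypeEquivRight
        intro x'
        have hx'c : φ.symm (sgl x') ∈ commc R := hφsymm _ (sgl_mem_commc hrefl' x')
        have := Neq_iff_phi hsymm hrefl hsymm' hrefl' hφ' hx'c hsx
        rw [LinearEquiv.apply_symm_apply] at this
        exact this.symm
      exact ⟨e4.trans (e0.trans e5)⟩
    · have hf1 : IsEmpty {x // npt x = A} := by
        refine ⟨fun ⟨x, hx⟩ => hA ⟨x, hx⟩⟩
      have hf2 : IsEmpty {x' // gg x' = A} := by
        refine ⟨fun ⟨x', hx'⟩ => ?_⟩
        have hvc : φ.symm (sgl x') ∈ commc R := hφsymm _ (sgl_mem_commc hrefl' x')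
        obtain ⟨e0⟩ := tset_equiv hsymm hrefl hsymm' hrefl' hφ' hvc
        have hx'mem : x' ∈ Tset R' (φ (φ.symm (sgl x'))) := by
          show Nset R' (sgl x') = Nset R' (φ (φ.symm (sgl x')))
          rw [LinearEquiv.apply_symm_apply]
        obtain ⟨y, hy⟩ := e0.symm ⟨x', hx'mem⟩
        exact hA ⟨y, hy.trans hx'⟩
      exact ⟨Equiv.equivOfIsEmpty _ _⟩
  set f : E ≃ E' := Equiv.ofFiberEquiv (fun A => Classical.choice (NE A)) with hf
  have key : ∀ x, Nset R (φ.symm (sgl (f x))) = Nset R (sgl x) := by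
    intro x
    exact Equiv.ofFiberEquiv_map (fun A => Classical.choice (NE A)) x
  refine ⟨f, fun x y => ?_⟩
  have hfx : φ.symm (sgl (f x)) ∈ commc R := hφsymm _ (sgl_mem_commc hrefl' (f x))
  have hfy : φ.symm (sgl (f y)) ∈ commc R := hφsymm _ (sgl_mem_commc hrefl' (f y))
  rw [← sgl_add_sgl_mem_commc hsymm hrefl x y, ← sgl_add_sgl_mem_commc hsymm' hrefl' (f x) (f y)]
  have hcongr := add_mem_commc_congr hsymm (sgl_mem_commc hrefl x) (sgl_mem_commc hrefl y)
    hfx hfy (key x).symm (key y).symm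
  rw [hcongr]
  rw [hφ' (φ.symm (sgl (f x)) + φ.symm (sgl (f y)))]
  rw [map_add, LinearEquiv.apply_symm_apply, LinearEquiv.apply_symm_apply]
end
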